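/- Let c ∈ ℂ and R = ℂ[t, t^{-1}, u | u² = t⁴ − 2ct² + 1]. Let (P_{−4,k})_{k ≥ −4} and (P_{−2,k})_{k ≥ −4} be the sequences of complex numbers each satisfying the recursion (6+2k)P_k = 4kc·P_{k−2} − 2(k−3)·P_{k−4} for k ≥ 0, with initial values P_{−4,−4} = 1, P_{−4,−3} = P_{−4,−2} = P_{−4,−1} = 0 and P_{−2,−2} = 1, P_{−2,−4} = P_{−2,−3} = P_{−2,−1} = 0 respectively. Then for every even integer l ≤ −6, in Ω¹_R/dR one has (class of t^l u dt) = P_{−4,−l−4}·ω_{−4} + P_{−2,−l−4}·ω_{−2}. -/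

import Mathlib

/-!
In `Ω¹_R/dR` the exact form `d(t^k u³)` vanishes. Differentiating `u² = t⁴ − 2ct² + 1` gives
`u du = (2t³ − 2ct) dt`, hence `d(t^k u³) = ((k+6) t^(k+3) − 2c(k+3) t^(k+1) + k t^(k−1)) u dt`,
i.e. `(k+6) ω_{k+3} − 2c(k+3) ω_{k+1} + k ω_{k−1} = 0`. For `k = −m−3` this is the recursion of
the `P`'s, so `ω_{−m−4} − P_{−4,m} ω_{−4} − P_{−2,m} ω_{−2}` satisfies it as well. It vanishes at
`m = −2` and `m = 0`, and the leading coefficient `6 + 2m` is nonzero for `m ≥ 0`, so it vanishes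
for every even `m ≥ −2`.
-/

noncomputable section
open Polynomial LaurentPolynomial

/-- The ring `R = ℂ[t,t⁻¹][u]/(u² − (t⁴ − 2ct² + 1))`, realized by adjoining a root `u`
of `X² − (t⁴ − 2ct² + 1)` to the ring of Laurent polynomials `ℂ[t,t⁻¹]`. -/
abbrev DJKM (c : ℂ) : Type :=
  AdjoinRoot ((X : Polynomial (LaurentPolynomial ℂ)) ^ 2 -
    Polynomial.C (T 4 - 2 * LaurentPolynomial.C c * T 2 + 1))

/-- The element `t^i` of `R`, for `i : ℤ`. -/
def tp (c : ℂ) (i : ℤ) : DJKM c := AdjoinRoot.of _ (T i)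

/-- The element `u` of `R`. -/
def uu (c : ℂ) : DJKM c := AdjoinRoot.root _

/-- The subspace `dR ⊆ Ω¹_R` of exact differentials. -/
def dR (c : ℂ) : Submodule ℂ (KaehlerDifferential ℂ (DJKM c)) :=
  LinearMap.range (KaehlerDifferential.D ℂ (DJKM c)).toLinearMap

/-- The class of `f·dg` in `Ω¹_R/dR`. -/
def cls (c : ℂ) (f g : DJKM c) : KaehlerDifferential ℂ (DJKM c) ⧸ dR c :=
  Submodule.Quotient.mk (f • KaehlerDifferential.D ℂ (DJKM c) g)

/-- `ω_k` : the class of `t^k·u·dt` in `Ω¹_R/dR`. -/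
def w (c : ℂ) (k : ℤ) : KaehlerDifferential ℂ (DJKM c) ⧸ dR c :=
  cls c (tp c k * uu c) (tp c 1)

/-- `ω₀` : the class of `t⁻¹·dt` in `Ω¹_R/dR`. -/
def w0 (c : ℂ) : KaehlerDifferential ℂ (DJKM c) ⧸ dR c :=
  cls c (tp c (-1)) (tp c 1)

namespace Derivation

variable {R A M : Type*} [CommRing R] [CommRing A] [Algebra R A] [AddCommGroup M]
  [Module A M] [Module R M] (D : Derivation R A M)

theorem leibniz_units_zpow (u : Aˣ) (n : ℤ) :
    D ↑(u ^ n) = n • (↑(u ^ (n - 1)) : A) • D ↑u := by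
  set e : ℤ → M := fun n ↦ D ↑(u ^ n) - n • (↑(u ^ (n - 1)) : A) • D ↑u with he
  have step (n : ℤ) : e (n + 1) = (u : A) • e n := by
    simp only [he]
    rw [zpow_add_one, Units.val_mul, leibniz, add_sub_cancel_right, smul_sub,
      smul_comm (u : A) (n : ℤ), smul_smul, ← Units.val_mul, mul_self_zpow, sub_add_cancel,
      add_smul, one_smul]
    abel
  suffices e n = 0 from sub_eq_zero.mp this
  induction n using Int.induction_on with
  | zero => simp [he]
  | succ n ih => rw [step, ih, smul_zero]
  | pred n ih =>
    rw [← sub_add_cancel (-(n : ℤ)) 1, step] at ih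
    simpa using congrArg ((↑u⁻¹ : A) • ·) ih

end Derivation

theorem eq_zero_of_smul_recurrence {K M : Type*} [DivisionRing K] [AddCommGroup M]
    [Module K M] (a b d : ℤ → K) (F : ℤ → M) (ha : ∀ m, 0 ≤ m → a m ≠ 0)
    (hF : ∀ m, 0 ≤ m → a m • F m = b m • F (m - 2) + d m • F (m - 4))
    (h_neg_two : F (-2) = 0) (h_zero : F 0 = 0) {m : ℤ} (hm : -2 ≤ m) (hm_even : Even m) : F m = 0 := by
  suffices h : ∀ n : ℕ, F (2 * n - 2) = 0 by
    obtain ⟨r, rfl⟩ := hm_even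
    have h := h (r + 1).toNat
    rwa [show 2 * ((r + 1).toNat : ℤ) - 2 = r + r by omega] at h
  intro n
  induction n using Nat.twoStepInduction with
  | zero => simpa using h_neg_two
  | one => simpa using h_zero
  | more n ih_zero ih₁ =>
    have h := hF (2 * n + 2) (by positivity)
    push_cast at ih₁ ⊢
    rw [show 2 * (n : ℤ) + 2 - 2 = 2 * (n + 1) - 2 by ring, show 2 * (n : ℤ) + 2 - 4 = 2 * n - 2 by ring,
      ih_zero, ih₁, smul_zero, smul_zero, add_zero] at h
    rw [show 2 * ((n : ℤ) + 2) - 2 = 2 * n + 2 by ring]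
    exact (smul_eq_zero.mp h).resolve_left (ha _ (by positivity))

section

variable (c : ℂ)

local notation "D" => KaehlerDifferential.D ℂ (DJKM c)

theorem tp_add (i j : ℤ) : tp c (i + j) = tp c i * tp c j := by
  rw [tp, tp, tp, T_add, map_mul]

theorem tp_zero : tp c 0 = 1 := by
  rw [tp, T_zero, map_one]

theorem tp_natCast (n : ℕ) : tp c n = tp c 1 ^ n := by
  rw [tp, tp, ← map_pow, T_pow, mul_one]

def tpUnit : (DJKM c)ˣ where
  val := tp c 1
  inv := tp c (-1)
  val_inv := by rw [← tp_add, add_neg_cancel, tp_zero]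
  inv_val := by rw [← tp_add, neg_add_cancel, tp_zero]

theorem tp_eq_zpow (i : ℤ) : tp c i = ↑(tpUnit c ^ i) := by
  induction i using Int.induction_on with
  | zero => rw [tp_zero, zpow_zero, Units.val_one]
  | succ n ih => rw [zpow_add_one, Units.val_mul, ← ih, tp_add]; rfl
  | pred n ih => rw [zpow_sub_one, Units.val_mul, ← ih, sub_eq_add_neg, tp_add]; rfl

theorem D_tp (i : ℤ) : D (tp c i) = (i : ℂ) • tp c (i - 1) • D (tp c 1) := by
  rw [tp_eq_zpow, tp_eq_zpow, Derivation.leibniz_units_zpow, Int.cast_smul_eq_zsmul]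
  rfl

theorem uu_sq : uu c ^ 2 = tp c 1 ^ 4 - (2 * c) • tp c 1 ^ 2 + 1 := by
  have h := AdjoinRoot.eval₂_root ((X : Polynomial (LaurentPolynomial ℂ)) ^ 2 -
    Polynomial.C (T 4 - 2 * LaurentPolynomial.C c * T 2 + 1))
  rw [eval₂_sub, eval₂_pow, eval₂_X, Polynomial.eval₂_C, sub_eq_zero] at h
  rw [uu, h, ← tp_natCast, ← tp_natCast, Algebra.smul_def,
    show algebraMap ℂ (DJKM c) (2 * c) = AdjoinRoot.of _ (LaurentPolynomial.C (2 * c)) from rfl,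
    map_mul LaurentPolynomial.C, map_ofNat]
  simp only [tp, Nat.cast_ofNat, map_add, map_sub, map_mul, map_one]

theorem uu_smul_D_uu : uu c • D (uu c) = (2 * tp c 1 ^ 3 - (2 * c) • tp c 1) • D (tp c 1) := by
  have h : D (uu c ^ 2) = (2 : ℂ) • uu c • D (uu c) := by
    rw [Derivation.leibniz_pow, pow_one, ← Nat.cast_smul_eq_nsmul ℂ, Nat.cast_ofNat]
  apply smul_right_injective _ (two_ne_zero' ℂ)
  dsimp only
  rw [← h, uu_sq]
  simp only [map_add, map_sub, Derivation.map_one_eq_zero, Derivation.map_smul,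
    Derivation.leibniz_pow, add_zero]
  rw [Algebra.smul_def (2 * c)]
  match_scalars
  simp only [map_ofNat]
  ring

theorem D_tp_mul_uu_pow_three (k : ℤ) :
    D (tp c k * uu c ^ 3) = (((k : ℂ) + 6) • (tp c (k + 3) * uu c)
      - (2 * c * (k + 3)) • (tp c (k + 1) * uu c) + (k : ℂ) • (tp c (k - 1) * uu c)) • D (tp c 1) := by
  have tp_add_natCast (n : ℕ) : tp c (k - 1 + n) = tp c (k - 1) * tp c 1 ^ n := by
    rw [tp_add, tp_natCast]
  have hk : tp c k = tp c (k - 1) * tp c 1 := by rw [← tp_add, sub_add_cancel]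
  have hk1 : tp c (k + 1) = tp c (k - 1) * tp c 1 ^ 2 := by
    rw [← tp_add_natCast]; ring_nf
  have hk3 : tp c (k + 3) = tp c (k - 1) * tp c 1 ^ 4 := by
    rw [← tp_add_natCast]; ring_nf
  rw [Derivation.leibniz, Derivation.leibniz_pow, D_tp, show 3 - 1 = 2 from rfl, sq (uu c), mul_smul,
    uu_smul_D_uu, hk1, hk3, hk, pow_succ (uu c) 2, uu_sq]
  simp only [Algebra.smul_def]
  match_scalars
  simp only [map_ofNat, map_intCast]
  ring

theorem w_relation (k : ℤ) :
    ((k : ℂ) + 6) • w c (k + 3) - (2 * c * (k + 3)) • w c (k + 1) + (k : ℂ) • w c (k - 1) = 0 := by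
  have h : ((k : ℂ) + 6) • w c (k + 3) - (2 * c * (k + 3)) • w c (k + 1) + (k : ℂ) • w c (k - 1)
      = Submodule.Quotient.mk (D (tp c k * uu c ^ 3)) := by
    rw [D_tp_mul_uu_pow_three]
    simp only [w, cls, ← Submodule.Quotient.mk_smul, ← Submodule.Quotient.mk_sub,
      ← Submodule.Quotient.mk_add, add_smul, sub_smul, smul_assoc]
  rw [h, Submodule.Quotient.mk_eq_zero]
  exact ⟨_, rfl⟩

theorem w_recurrence (m : ℤ) :
    ((6 : ℂ) + 2 * m) • w c (-m - 4) = (4 * m * c) • w c (-m - 2) - (2 * ((m : ℂ) - 3)) • w c (-m) := by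
  have h := w_relation c (-m - 3)
  rw [show -m - 3 + 3 = -m by ring, show -m - 3 + 1 = -m - 2 by ring,
    show -m - 3 - 1 = -m - 4 by ring] at h
  push_cast at h
  linear_combination (norm := module) (-2 : ℂ) • h

end

theorem stmt11_general (c : ℂ) (P4 P2 : ℤ → ℂ)
    (h44 : P4 (-4) = 1) (h42 : P4 (-2) = 0)
    (h24 : P2 (-4) = 0) (h22 : P2 (-2) = 1)
    (hrec4 : ∀ k : ℤ, 0 ≤ k →
      ((6 : ℂ) + 2 * (k : ℂ)) * P4 k = 4 * (k : ℂ) * c * P4 (k - 2) - 2 * ((k : ℂ) - 3) * P4 (k - 4))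
    (hrec2 : ∀ k : ℤ, 0 ≤ k →
      ((6 : ℂ) + 2 * (k : ℂ)) * P2 k = 4 * (k : ℂ) * c * P2 (k - 2) - 2 * ((k : ℂ) - 3) * P2 (k - 4)) :
    ∀ l : ℤ, l ≤ -6 → Even l → w c l = P4 (-l - 4) • w c (-4) + P2 (-l - 4) • w c (-2) := by
  intro l hl hl_even
  set F : ℤ → KaehlerDifferential ℂ (DJKM c) ⧸ dR c :=
    fun m ↦ w c (-m - 4) - P4 m • w c (-4) - P2 m • w c (-2) with hF
  have hP0 : P4 0 = 1 ∧ P2 0 = 0 := by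
    have h4 := hrec4 0 le_rfl
    have h2 := hrec2 0 le_rfl
    norm_num [h44, h24] at h4 h2
    exact ⟨h4, h2⟩
  have key : F (-l - 4) = 0 := by
    refine eq_zero_of_smul_recurrence (fun m ↦ 6 + 2 * (m : ℂ)) (fun m ↦ 4 * m * c)
      (fun m ↦ -(2 * ((m : ℂ) - 3))) F ?_ ?_ (by simp [hF, h42, h22]) (by simp [hF, hP0])
      (by omega) (hl_even.neg.sub ⟨2, rfl⟩)
    · intro m hm
      exact_mod_cast (by omega : 6 + 2 * m ≠ 0)
    · intro m hm
      simp only [hF, show -(m - 2) - 4 = -m - 2 by ring, show -(m - 4) - 4 = -m by ring]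
      linear_combination (norm := module)
        w_recurrence c m - hrec4 m hm • w c (-4) - hrec2 m hm • w c (-2)
  simp only [hF, show -(-l - 4) - 4 = l by ring] at key
  rwa [← sub_eq_zero, ← sub_sub]

/-- For even `l ≤ −6`, the class of `t^l u dt` equals `P_{−4,−l−4}·ω₋₄ + P_{−2,−l−4}·ω₋₂`. -/
theorem stmt11 (c : ℂ) (P4 P2 : ℤ → ℂ)
    (h44 : P4 (-4) = 1) (h43 : P4 (-3) = 0) (h42 : P4 (-2) = 0) (h41 : P4 (-1) = 0)
    (h24 : P2 (-4) = 0) (h23 : P2 (-3) = 0) (h22 : P2 (-2) = 1) (h21 : P2 (-1) = 0)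
    (hrec4 : ∀ k : ℤ, 0 ≤ k →
      ((6 : ℂ) + 2 * (k : ℂ)) * P4 k = 4 * (k : ℂ) * c * P4 (k - 2) - 2 * ((k : ℂ) - 3) * P4 (k - 4))
    (hrec2 : ∀ k : ℤ, 0 ≤ k →
      ((6 : ℂ) + 2 * (k : ℂ)) * P2 k = 4 * (k : ℂ) * c * P2 (k - 2) - 2 * ((k : ℂ) - 3) * P2 (k - 4)) :
    ∀ l : ℤ, l ≤ -6 → Even l → w c l = P4 (-l - 4) • w c (-4) + P2 (-l - 4) • w c (-2) :=
  stmt11_general c P4 P2 h44 h42 h24 h22 hrec4 hrec2
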